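/- arXiv:2410.08026 — 4 statements merged into one kernel-verified Lean document; each statement's English description precedes it below -/
import Mathlib

section
/- Let $\mathcal{H}$ be a Hilbert space and $U = \sum_{l=1}^N a_l V_l$ with $V_l \in \mathcal{H}$ and $a_l \geq 0$. Then for any positive integer $k$, there exist nonnegative integers $k_1, \dots, k_N$ with $\sum_{i=1}^N k_i = k$ such that $\| U - \frac{\|a\|_1}{k} \sum_{l=1}^N k_l V_l \|^2 \leq \frac{\|a\|_1}{k} \sum_{l=1}^N a_l \|V_l\|^2 \leq \frac{\|a\|_1^2}{k} \max_i \|V_i\|^2$, where $\|a\|_1 = \sum_{l=1}^N a_l$. -/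
/-!
Derandomized empirical mean. If `i` is drawn with probability `a i / A`, where `A = ∑ a`, then
`A • V i` has mean `U` and `E ‖U - A • V i‖² ≤ A ∑ a_l ‖V_l‖²`. Adding one such term to a
partial sum `W` raises `‖W‖²` on average by at most this variance, since the cross term has mean
zero; hence some index does at least as well as the average. Choosing `k` indices greedily gives
`‖k U - A ∑ κ_l V_l‖² ≤ k A ∑ a_l ‖V_l‖²`, and dividing by `k` gives the bound.
-/

open scoped RealInnerProductSpace
open Finset

lemma exists_le_of_sum_mul_le {ι : Type*} {s : Finset ι} {a f : ι → ℝ} {c : ℝ}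
    (ha : ∀ i ∈ s, 0 ≤ a i) (hpos : 0 < ∑ i ∈ s, a i)
    (h : ∑ i ∈ s, a i * f i ≤ (∑ i ∈ s, a i) * c) : ∃ i ∈ s, f i ≤ c := by
  by_contra! hlt
  obtain ⟨j, hj, hj0⟩ : ∃ j ∈ s, 0 < a j := by
    by_contra! hnonpos
    exact (sum_nonpos hnonpos).not_gt hpos
  have : ∑ i ∈ s, a i * c < ∑ i ∈ s, a i * f i :=
    sum_lt_sum (fun i hi => mul_le_mul_of_nonneg_left (hlt i hi).le (ha i hi))
      ⟨j, hj, mul_lt_mul_of_pos_left (hlt j hj) hj0⟩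
  rw [← sum_mul] at this
  linarith

lemma sum_mul_le_sum_mul_iSup {ι : Type*} [Fintype ι] {a f : ι → ℝ} (ha : ∀ i, 0 ≤ a i) :
    ∑ i, a i * f i ≤ (∑ i, a i) * ⨆ i, f i := by
  rw [sum_mul]
  exact sum_le_sum fun i _ =>
    mul_le_mul_of_nonneg_left (le_ciSup (Set.finite_range f).bddAbove i) (ha i)

section Maurey

variable {ι H : Type*} [Fintype ι] [NormedAddCommGroup H] [InnerProductSpace ℝ H]

lemma sum_mul_norm_add_sub_smul_sq (a : ι → ℝ) (V : ι → H) (W : H) :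
    ∑ i, a i * ‖W + (∑ l, a l • V l - (∑ l, a l) • V i)‖ ^ 2
      = (∑ l, a l) * (‖W‖ ^ 2 - ‖∑ l, a l • V l‖ ^ 2
          + (∑ l, a l) * ∑ l, a l * ‖V l‖ ^ 2) := by
  set U := ∑ l, a l • V l with hU
  set A := ∑ l, a l
  have hexpand : ∀ i, ‖W + (U - A • V i)‖ ^ 2
      = ‖W + U‖ ^ 2 - 2 * A * ⟪W + U, V i⟫ + A ^ 2 * ‖V i‖ ^ 2 := by
    intro i
    rw [← add_sub_assoc, norm_sub_sq_real, real_inner_smul_right, norm_smul,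
      Real.norm_eq_abs, mul_pow, sq_abs]
    ring
  have hcross : ∑ i, a i * ⟪W + U, V i⟫ = ⟪W, U⟫ + ‖U‖ ^ 2 := by
    simp_rw [← real_inner_smul_right]
    rw [← inner_sum, ← hU, inner_add_left, real_inner_self_eq_norm_sq]
  simp_rw [hexpand, mul_add, mul_sub]
  rw [sum_add_distrib, sum_sub_distrib, ← sum_mul]
  simp_rw [mul_left_comm _ (2 * A), mul_left_comm _ (A ^ 2)]
  rw [← mul_sum, ← mul_sum, hcross, norm_add_sq_real]
  ring

variable [Nonempty ι] {a : ι → ℝ} (ha : ∀ l, 0 ≤ a l) (V : ι → H)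
include ha

lemma exists_norm_add_sub_smul_sq_le (W : H) :
    ∃ i, ‖W + (∑ l, a l • V l - (∑ l, a l) • V i)‖ ^ 2
      ≤ ‖W‖ ^ 2 + (∑ l, a l) * ∑ l, a l * ‖V l‖ ^ 2 := by
  rcases (sum_nonneg fun l _ => ha l).eq_or_lt with hA | hA
  · have ha0 : ∀ l, a l = 0 := fun l =>
      (sum_eq_zero_iff_of_nonneg fun l _ => ha l).mp hA.symm l (mem_univ l)
    simp [ha0]
  · have havg : ∑ i, a i * ‖W + (∑ l, a l • V l - (∑ l, a l) • V i)‖ ^ 2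
        ≤ (∑ l, a l) * (‖W‖ ^ 2 + (∑ l, a l) * ∑ l, a l * ‖V l‖ ^ 2) := by
      rw [sum_mul_norm_add_sub_smul_sq]
      gcongr
      linarith [sq_nonneg ‖∑ l, a l • V l‖]
    simpa using exists_le_of_sum_mul_le (fun l _ => ha l) hA havg

lemma exists_sum_eq_and_norm_sq_le (m : ℕ) :
    ∃ κ : ι → ℕ, ∑ l, κ l = m ∧
      ‖(m : ℝ) • ∑ l, a l • V l - (∑ l, a l) • ∑ l, (κ l : ℝ) • V l‖ ^ 2
        ≤ m * ((∑ l, a l) * ∑ l, a l * ‖V l‖ ^ 2) := by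
  induction m with
  | zero => exact ⟨0, by simp, by simp⟩
  | succ m ih =>
    classical
    obtain ⟨κ, hκ, hnorm⟩ := ih
    obtain ⟨i, hi⟩ := exists_norm_add_sub_smul_sq_le ha V
      ((m : ℝ) • ∑ l, a l • V l - (∑ l, a l) • ∑ l, (κ l : ℝ) • V l)
    refine ⟨κ + Pi.single i 1, by simp [sum_add_distrib, hκ], ?_⟩
    have hsplit : ∑ l, ((κ + Pi.single i 1 : ι → ℕ) l : ℝ) • V l
        = ∑ l, (κ l : ℝ) • V l + V i := by
      simp [add_smul, sum_add_distrib, Pi.single_apply, apply_ite (Nat.cast : ℕ → ℝ), ite_smul]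
    rw [hsplit, Nat.cast_succ]
    calc _ = ‖((m : ℝ) • ∑ l, a l • V l - (∑ l, a l) • ∑ l, (κ l : ℝ) • V l)
              + (∑ l, a l • V l - (∑ l, a l) • V i)‖ ^ 2 := by
            congr 2; module
      _ ≤ m * ((∑ l, a l) * ∑ l, a l * ‖V l‖ ^ 2) + (∑ l, a l) * ∑ l, a l * ‖V l‖ ^ 2 :=
            hi.trans (by gcongr)
      _ = _ := by ring

end Maurey

/-- **Maurey's sparsification lemma.** -/
theorem maurey_sparsification {H : Type*} [NormedAddCommGroup H] [InnerProductSpace ℝ H]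
    (N : ℕ) (hN : 0 < N) (a : Fin N → ℝ) (ha : ∀ l, 0 ≤ a l) (V : Fin N → H)
    (U : H) (hU : U = ∑ l, a l • V l) (k : ℕ) (hk : 0 < k) :
    ∃ κ : Fin N → ℕ, (∑ i, κ i = k) ∧
      ‖U - ((∑ l, a l) / k) • ∑ l, (κ l : ℝ) • V l‖ ^ 2
        ≤ ((∑ l, a l) / k) * ∑ l, a l * ‖V l‖ ^ 2 ∧
      ((∑ l, a l) / k) * ∑ l, a l * ‖V l‖ ^ 2
        ≤ ((∑ l, a l) ^ 2 / k) * ⨆ i, ‖V i‖ ^ 2 := by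
  have : Nonempty (Fin N) := ⟨⟨0, hN⟩⟩
  subst hU
  set A := ∑ l, a l
  have hk0 : (0 : ℝ) < k := by exact_mod_cast hk
  obtain ⟨κ, hκ, hnorm⟩ := exists_sum_eq_and_norm_sq_le ha V k
  refine ⟨κ, hκ, ?_, ?_⟩
  · have hscale : ∑ l, a l • V l - (A / k) • ∑ l, (κ l : ℝ) • V l
        = (k : ℝ)⁻¹ • ((k : ℝ) • ∑ l, a l • V l - A • ∑ l, (κ l : ℝ) • V l) := by
      rw [smul_sub, inv_smul_smul₀ hk0.ne', smul_smul, div_eq_inv_mul]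
    rw [hscale, norm_smul, mul_pow, Real.norm_eq_abs, abs_inv, Nat.abs_cast]
    calc _ ≤ ((k : ℝ)⁻¹) ^ 2 * (k * (A * ∑ l, a l * ‖V l‖ ^ 2)) := by gcongr
      _ = _ := by field_simp
  · calc _ ≤ (A / k) * (A * ⨆ i, ‖V i‖ ^ 2) := by
          gcongr
          · exact div_nonneg (sum_nonneg fun l _ => ha l) hk0.le
          · exact sum_mul_le_sum_mul_iSup ha
      _ = _ := by ring
end

section
/- Let $\mathcal{F}_1, \dots, \mathcal{F}_L$ be classes of maps, where each $\Psi \in \mathcal{F}_i$ maps $\mathbb{R}^{n \times d_{i-1}} \to \mathbb{R}^{n \times d_i}$ and is $\rho_i$-Lipschitz with respect to norms $|\cdot|_{i-1}$ and $|\cdot|_i$: $|\Psi(X) - \Psi(X')|_i \leq \rho_i |X - X'|_{i-1}$. Let $\mathcal{H}_L(X) = \{\Psi_L \circ \cdots \circ \Psi_1(X) : \Psi_l \in \mathcal{F}_l\}$ for a fixed input $X$. Given $\epsilon_1, \dots, \epsilon_L > 0$, define $s_L = \sum_{i=1}^L (\prod_{j=i+1}^L \rho_j) \epsilon_i$. Then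 the proper covering number satisfies $\mathcal{N}(\mathcal{H}_L(X), s_L, |\cdot|_L) \leq \prod_{i=0}^{L-1} \sup_{\Psi_1, \dots, \Psi_i} \mathcal{N}(\{\Psi \circ \Psi_i \circ \cdots \circ \Psi_1(X) : \Psi \in \mathcal{F}_{i+1}\}, \epsilon_{i+1}, |\cdot|_{i+1})$. -/
/-!
Cover the outputs of the first `k` layers properly at scale `s_k` by a finite set `V`. For each
centre `v ∈ V`, properly cover the one-layer image `{Ψ v : Ψ ∈ F_k}` at scale `ε_k`; these
centres are themselves outputs of `k + 1` layers. Since every `Ψ ∈ F_k` is `ρ_k`-Lipschitz, an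
output `Ψ u` lies within `ρ_k s_k` of `Ψ v` for the centre `v` near `u`, so the union of the
covers is a proper cover at scale `s_{k+1} = ρ_k s_k + ε_k` of size at most `|V|` times the
supremum of the one-layer covering numbers. Induct on `k`.
-/

open Finset

/-- Proper covering number of a set `U` at scale `ε`, with respect to the norm of
the ambient (semi)normed group: the least cardinality of a subset `V ⊆ U` such that
every `u ∈ U` is within distance `ε` of some `v ∈ V`. -/
noncomputable def properCoverNum {α : Type*} [SeminormedAddCommGroup α]
    (U : Set α) (ε : ℝ) : ℕ∞ :=
  ⨅ (V : Finset α) (_ : ↑V ⊆ U) (_ : ∀ u ∈ U, ∃ v ∈ V, ‖v - u‖ ≤ ε), (V.card : ℕ∞)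

/-- Composition of the first `k` layer maps. -/
def comps {E : ℕ → Type*} (Ψ : ∀ i, E i → E (i + 1)) : ∀ k, E 0 → E k
  | 0, x => x
  | (k + 1), x => Ψ k (comps Ψ k x)

section properCoverNum

variable {α β : Type*} [SeminormedAddCommGroup α] [SeminormedAddCommGroup β]

theorem properCoverNum_le_card {U : Set α} {ε : ℝ} {V : Finset α} (hVU : ↑V ⊆ U)
    (hV : ∀ u ∈ U, ∃ v ∈ V, ‖v - u‖ ≤ ε) : properCoverNum U ε ≤ V.card :=
  iInf₂_le_of_le V hVU (iInf_le _ hV)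

@[simp]
theorem properCoverNum_empty (ε : ℝ) : properCoverNum (∅ : Set α) ε = 0 :=
  nonpos_iff_eq_zero.1 <| by
    simpa using properCoverNum_le_card (U := (∅ : Set α)) (V := ∅) (ε := ε) (by simp) (by simp)

theorem one_le_properCoverNum {U : Set α} (hU : U.Nonempty) (ε : ℝ) :
    1 ≤ properCoverNum U ε := by
  refine le_iInf₂ fun V _ => le_iInf fun hV => ?_
  obtain ⟨u, hu⟩ := hU
  obtain ⟨v, hv, -⟩ := hV u hu
  exact_mod_cast Finset.card_pos.2 ⟨v, hv⟩

theorem eq_empty_of_properCoverNum_eq_zero {U : Set α} {ε : ℝ} (h : properCoverNum U ε = 0) :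
    U = ∅ :=
  Set.not_nonempty_iff_eq_empty.1 fun hU => by simpa [h] using one_le_properCoverNum hU ε

theorem properCoverNum_le_one_of_subsingleton {U : Set α} {ε : ℝ} (hU : U.Subsingleton)
    (hε : 0 ≤ ε) : properCoverNum U ε ≤ 1 := by
  rcases hU.eq_empty_or_singleton with rfl | ⟨x, rfl⟩
  · simp
  · simpa using properCoverNum_le_card (V := {x}) (by simp) (by simp [hε])

theorem properCoverNum_union_le (S T : Set α) (ε : ℝ) :
    properCoverNum (S ∪ T) ε ≤ properCoverNum S ε + properCoverNum T ε := by
  classical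
  refine ENat.le_iInf_add_iInf fun V W => ENat.le_iInf_add_iInf fun hVS hWT =>
    ENat.le_iInf_add_iInf fun hV hW => ?_
  calc properCoverNum (S ∪ T) ε ≤ (V ∪ W).card := by
        refine properCoverNum_le_card (by push_cast; exact Set.union_subset_union hVS hWT) ?_
        rintro u (hu | hu)
        · obtain ⟨v, hv, hvu⟩ := hV u hu
          exact ⟨v, Finset.mem_union_left _ hv, hvu⟩
        · obtain ⟨w, hw, hwu⟩ := hW u hu
          exact ⟨w, Finset.mem_union_right _ hw, hwu⟩
    _ ≤ V.card + W.card := by exact_mod_cast Finset.card_union_le V W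

theorem properCoverNum_biUnion_le {ι : Type*} (I : Finset ι) (S : ι → Set α) (ε : ℝ) :
    properCoverNum (⋃ i ∈ I, S i) ε ≤ ∑ i ∈ I, properCoverNum (S i) ε := by
  classical
  induction I using Finset.induction_on with
  | empty => simp
  | insert i I hi ih =>
    rw [Finset.set_biUnion_insert, Finset.sum_insert hi]
    exact (properCoverNum_union_le _ _ ε).trans (by gcongr)

theorem properCoverNum_le_of_subset_of_forall_near {S T : Set α} {δ ε : ℝ} (hST : S ⊆ T)
    (hT : ∀ t ∈ T, ∃ s ∈ S, ‖s - t‖ ≤ δ) : properCoverNum T (ε + δ) ≤ properCoverNum S ε := by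
  refine le_iInf₂ fun V hVS => le_iInf fun hV => properCoverNum_le_card (hVS.trans hST) ?_
  intro t ht
  obtain ⟨s, hs, hst⟩ := hT t ht
  obtain ⟨v, hv, hvs⟩ := hV s hs
  exact ⟨v, hv, (norm_sub_le_norm_sub_add_norm_sub v s t).trans (add_le_add hvs hst)⟩

theorem properCoverNum_seq_le {G : Set (α → β)} {U : Set α} {ρ s ε : ℝ} (hρ : 0 ≤ ρ)
    (hG : ∀ g ∈ G, ∀ x y, ‖g x - g y‖ ≤ ρ * ‖x - y‖) :
    properCoverNum (G.seq U) (ρ * s + ε) ≤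
      properCoverNum U s * ⨆ u ∈ U, properCoverNum ((fun g => g u) '' G) ε := by
  set b := ⨆ u ∈ U, properCoverNum ((fun g => g u) '' G) ε
  -- `⊤ * 0 = 0` in `ℕ∞`, so a vanishing supremum has to be treated apart.
  by_cases hb : b = 0
  · have hGU : G.seq U = ∅ := by
      simp only [Set.seq_eq_image2, ← Set.iUnion_image_right, Set.iUnion_eq_empty]
      exact fun u hu => eq_empty_of_properCoverNum_eq_zero (iSup₂_eq_bot.1 hb u hu)
    simp [hGU]
  rw [properCoverNum.eq_1 U s]
  simp only [ENat.iInf_mul_of_ne hb]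
  refine le_iInf₂ fun V hVU => le_iInf fun hV => ?_
  have hnear : ∀ y ∈ G.seq U, ∃ z ∈ G.seq ↑V, ‖z - y‖ ≤ ρ * s := by
    rintro _ ⟨g, hg, u, hu, rfl⟩
    obtain ⟨v, hv, hvu⟩ := hV u hu
    exact ⟨g v, ⟨g, hg, v, hv, rfl⟩, (hG g hg v u).trans (mul_le_mul_of_nonneg_left hvu hρ)⟩
  calc properCoverNum (G.seq U) (ρ * s + ε)
      = properCoverNum (G.seq U) (ε + ρ * s) := by rw [add_comm]
    _ ≤ properCoverNum (G.seq ↑V) ε :=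
        properCoverNum_le_of_subset_of_forall_near (Set.seq_mono le_rfl hVU) hnear
    _ = properCoverNum (⋃ v ∈ V, (fun g => g v) '' G) ε := by
        simp only [Set.seq_eq_image2, ← Set.iUnion_image_right, Finset.mem_coe]
    _ ≤ ∑ v ∈ V, properCoverNum ((fun g => g v) '' G) ε := properCoverNum_biUnion_le _ _ _
    _ ≤ ∑ _v ∈ V, b :=
        Finset.sum_le_sum fun v hv => le_iSup₂_of_le v (hVU hv) le_rfl
    _ = V.card * b := by rw [Finset.sum_const, nsmul_eq_mul]

end properCoverNum

theorem Finset.sum_range_succ_prod_Ico_mul {R : Type*} [CommSemiring R] (ρ ε : ℕ → R) (k : ℕ) :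
    ∑ i ∈ range (k + 1), (∏ j ∈ Ico (i + 1) (k + 1), ρ j) * ε i =
      ρ k * ∑ i ∈ range k, (∏ j ∈ Ico (i + 1) k, ρ j) * ε i + ε k := by
  rw [sum_range_succ, Ico_self, prod_empty, one_mul, mul_sum]
  congr 1
  refine sum_congr rfl fun i hi => ?_
  rw [prod_Ico_succ_top (mem_range.1 hi), mul_comm _ (ρ k), mul_assoc]

section comps

variable {E : ℕ → Type*}

theorem comps_congr {Ψ Ψ' : ∀ i, E i → E (i + 1)} {k : ℕ} (h : ∀ i < k, Ψ i = Ψ' i)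
    (x : E 0) : comps Ψ k x = comps Ψ' k x := by
  induction k with
  | zero => rfl
  | succ k ih => simp only [comps, ih fun i hi => h i (by omega), h k k.lt_succ_self]

theorem comps_update_succ (Ψ : ∀ i, E i → E (i + 1)) (k : ℕ) (g : E k → E (k + 1)) (x : E 0) :
    comps (Function.update Ψ k g) (k + 1) x = g (comps Ψ k x) := by
  rw [comps, Function.update_self, comps_congr fun i hi => Function.update_of_ne hi.ne _ _]

def compsImage (F : ∀ i, Set (E i → E (i + 1))) (X : E 0) (k : ℕ) : Set (E k) :=
  {y | ∃ Ψ : ∀ i, E i → E (i + 1), (∀ i, Ψ i ∈ F i) ∧ y = comps Ψ k X}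

variable (F : ∀ i, Set (E i → E (i + 1))) (X : E 0)

theorem compsImage_zero_subsingleton : (compsImage F X 0).Subsingleton := by
  rintro _ ⟨_, -, rfl⟩ _ ⟨_, -, rfl⟩
  rfl

theorem compsImage_succ (k : ℕ) : compsImage F X (k + 1) = (F k).seq (compsImage F X k) := by
  ext y
  constructor
  · rintro ⟨Ψ, hΨ, rfl⟩
    exact ⟨Ψ k, hΨ k, _, ⟨Ψ, hΨ, rfl⟩, rfl⟩
  · rintro ⟨g, hg, _, ⟨Ψ, hΨ, rfl⟩, rfl⟩
    refine ⟨Function.update Ψ k g, ?_, (comps_update_succ Ψ k g X).symm⟩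
    exact (Function.forall_update_iff Ψ (p := fun i φ => φ ∈ F i)).2 ⟨hg, fun i _ => hΨ i⟩

variable [∀ i, SeminormedAddCommGroup (E i)]

theorem properCoverNum_compsImage_le {ρ ε : ℕ → ℝ} (hρ : ∀ i, 0 ≤ ρ i)
    (hLip : ∀ i, ∀ Ψ ∈ F i, ∀ X X' : E i, ‖Ψ X - Ψ X'‖ ≤ ρ i * ‖X - X'‖) (k : ℕ) :
    properCoverNum (compsImage F X k) (∑ i ∈ range k, (∏ j ∈ Ico (i + 1) k, ρ j) * ε i) ≤
      ∏ i ∈ range k, ⨆ (Ψ : ∀ j, E j → E (j + 1)) (_ : ∀ j < i, Ψ j ∈ F j),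
        properCoverNum ((fun g => g (comps Ψ i X)) '' F i) (ε i) := by
  induction k with
  | zero =>
    simpa using properCoverNum_le_one_of_subsingleton (compsImage_zero_subsingleton F X) le_rfl
  | succ k ih =>
    rw [compsImage_succ, sum_range_succ_prod_Ico_mul, prod_range_succ]
    refine (properCoverNum_seq_le (hρ k) (hLip k)).trans (mul_le_mul' ih ?_)
    exact iSup₂_le fun _ ⟨Ψ, hΨ, hy⟩ => hy ▸ le_iSup₂_of_le Ψ (fun j _ => hΨ j) le_rfl

end comps

/-- Layers are indexed by `i = 0, …, L-1`, so that layer `i` here is layer `i+1` of the paper;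
`E i` is `ℝ^{n × d_i}` equipped with the norm `|·|_i`. -/
theorem coverNum_composition_le_general (L : ℕ)
    (E : ℕ → Type*) [∀ i, SeminormedAddCommGroup (E i)]
    (F : ∀ i : ℕ, Set (E i → E (i + 1))) (ρ ε : ℕ → ℝ)
    (hρ : ∀ i, 0 < ρ i)
    (hLip : ∀ i, ∀ Ψ ∈ F i, ∀ X X' : E i, ‖Ψ X - Ψ X'‖ ≤ ρ i * ‖X - X'‖)
    (X : E 0) :
    properCoverNum
        {y : E L | ∃ Ψ : ∀ i, E i → E (i + 1), (∀ i, Ψ i ∈ F i) ∧ y = comps Ψ L X}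
        (∑ i ∈ Finset.range L, (∏ j ∈ Finset.Ico (i + 1) L, ρ j) * ε i)
      ≤ ∏ i ∈ Finset.range L,
          ⨆ (Ψ : ∀ j, E j → E (j + 1)) (_ : ∀ j < i, Ψ j ∈ F j),
            properCoverNum ((fun g => g (comps Ψ i X)) '' F i) (ε i) :=
  properCoverNum_compsImage_le F X (fun i => (hρ i).le) hLip L

/-- **Layer-by-layer covering bound (Proposition 1).** Layers are indexed by
`i = 0, …, L-1`, so that layer `i` here corresponds to layer `i+1` of the paper;
`E i` is `ℝ^{n × d_i}` equipped with the norm `|·|_i`. -/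
theorem coverNum_composition_le (L : ℕ) (hL : 0 < L)
    (E : ℕ → Type*) [∀ i, SeminormedAddCommGroup (E i)]
    (F : ∀ i : ℕ, Set (E i → E (i + 1))) (ρ ε : ℕ → ℝ)
    (hρ : ∀ i, 0 < ρ i) (hε : ∀ i, 0 < ε i)
    (hLip : ∀ i, ∀ Ψ ∈ F i, ∀ X X' : E i, ‖Ψ X - Ψ X'‖ ≤ ρ i * ‖X - X'‖)
    (X : E 0) :
    properCoverNum
        {y : E L | ∃ Ψ : ∀ i, E i → E (i + 1), (∀ i, Ψ i ∈ F i) ∧ y = comps Ψ L X}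
        (∑ i ∈ Finset.range L, (∏ j ∈ Finset.Ico (i + 1) L, ρ j) * ε i)
      ≤ ∏ i ∈ Finset.range L,
          ⨆ (Ψ : ∀ j, E j → E (j + 1)) (_ : ∀ j < i, Ψ j ∈ F j),
            properCoverNum ((fun g => g (comps Ψ i X)) '' F i) (ε i) :=
  coverNum_composition_le_general L E F ρ ε hρ hLip X
end

section
/- Let $\Psi(x) = (\psi_1(x), \dots, \psi_m(x))$ with $\psi_i(x) = \sum_{j=1}^p \beta_{ij} g_{ij}(x)$, where $g_{ij}: \mathbb{R}^d \to \mathbb{R}$ are fixed basis functions and $B = (\beta_{ij}) \in \mathbb{R}^{m \times p}$. Fix data points $x_1, \dots, x_n \in \mathbb{R}^d$. Suppose $\|B\|_r \leq b$ and $\|G(X)\|_{v,s} \leq c$ where $1/r + 1/s = 1$, $r,s > 0$, $0 < v \leq 2$, $\|B\|_r = (\sum_{i,j} |\beta_{ij}|^r)^{1/r}$ and $\|G(X)\|_{v,s} = \{\sum_{i,j} (\sum_{k=1}^n |g_{ij}(x_k)|^v)^{s/v}\}^{1/s}$. Then the class $\{\Psi(X) \in \mathbb{R}^{n \times m} : \Psi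 \text{ as above}\}$, where $\Psi(X)$ is the matrix with rows $\Psi(x_k)$, satisfies $\log \mathcal{N}(\{\Psi(X)\}, \epsilon, \|\cdot\|_F) \leq \frac{b^2 c^2}{\epsilon^2} \log(2mp)$ for any $\epsilon > 0$. -/
open Finset

/-- Frobenius norm of an `n × m` real matrix (given as a function). -/
noncomputable def frobNorm {n m : ℕ} (A : Fin n → Fin m → ℝ) : ℝ :=
  Real.sqrt (∑ k, ∑ i, (A k i) ^ 2)

/-- The class `{Ψ(X) ∈ ℝ^{n×m}}` of data matrices, where
`Ψ(x) = (ψ_1(x),…,ψ_m(x))`, `ψ_i = ∑_j β_{ij} g_{ij}`, and the coefficient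
matrix `β` has `‖β‖_r ≤ b`. The `(k,i)` entry of `Ψ(X)` is `ψ_i(x_k)`. -/
def basisClass {α : Type*} (n m p : ℕ) (g : Fin m → Fin p → α → ℝ)
    (x : Fin n → α) (r b : ℝ) : Set (Fin n → Fin m → ℝ) :=
  {A | ∃ β : Fin m → Fin p → ℝ,
    (∑ i, ∑ j, |β i j| ^ r) ^ (1 / r) ≤ b ∧
    ∀ k i, A k i = ∑ j, β i j * g i j (x k)}

/-!
Write `Ψ(X) = ∑ β_ij M_ij`, where `M_ij` is the matrix of the single basis function `g_ij`.
Since `v ≤ 2`, `‖M_ij‖_F ≤ ‖g_ij(X)‖_v`, so Hölder's inequality gives `∑ |β_ij| ‖M_ij‖_F ≤ bc`: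
the class lies in the convex hull of the `2mp` points `± bc M_ij / ‖M_ij‖_F`. By Maurey's
empirical method every point of this hull is within `ε` of a rescaled average of
`k ≤ b²c²/ε²` of these points, and there are at most `(2mp)^k` such averages. Projecting them
onto the class, which is closed and convex, keeps the cover inside the class without
increasing any distance to it.
-/

open scoped RealInnerProductSpace

section Maurey

variable {F : Type*} [NormedAddCommGroup F] [InnerProductSpace ℝ F] {I : Type*} [Fintype I]

theorem exists_le_sum_mul_of_sum_eq_one {w v : I → ℝ} (hw0 : ∀ i, 0 ≤ w i)
    (hw1 : ∑ i, w i = 1) : ∃ i, v i ≤ ∑ i, w i * v i := by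
  obtain ⟨i, -, hi⟩ := (concaveOn_id (𝕜 := ℝ) convex_univ).exists_le_of_centerMass
    (t := univ) (p := v) (fun i _ => hw0 i) (by simp [hw1]) (fun _ _ => Set.mem_univ _)
  exact ⟨i, by simpa [centerMass_eq_of_sum_1 _ _ hw1] using hi⟩

theorem sum_mul_norm_add_sq {q : I → ℝ} (hq : ∑ i, q i = 1) {w : I → F}
    (hw : ∑ i, q i • w i = 0) (c : F) :
    ∑ i, q i * ‖c + w i‖ ^ 2 = ‖c‖ ^ 2 + ∑ i, q i * ‖w i‖ ^ 2 := by
  have hcross : ∑ i, q i * ⟪c, w i⟫ = 0 := by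
    simp_rw [← real_inner_smul_right, ← inner_sum, hw, inner_zero_right]
  simp_rw [norm_add_sq_real, mul_add, sum_add_distrib, ← sum_mul, hq]
  rw [show ∑ i, q i * (2 * ⟪c, w i⟫) = 2 * ∑ i, q i * ⟪c, w i⟫ by
    rw [mul_sum]; exact sum_congr rfl fun i _ => by ring, hcross]
  ring

theorem sum_fin_succ_pi {M : Type*} [AddCommMonoid M] (k : ℕ) (G : (Fin (k + 1) → I) → M) :
    ∑ f, G f = ∑ i, ∑ f : Fin k → I, G (Fin.cons i f) := by
  rw [← (Fin.consEquiv fun _ => I).sum_comp, Fintype.sum_prod_type]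
  rfl

/-- The second moment of a random walk started at `c`, with `k` i.i.d. centred steps of law `q`. -/
theorem sum_prod_mul_norm_add_sum_sq {q : I → ℝ} (hq : ∑ i, q i = 1) {w : I → F}
    (hw : ∑ i, q i • w i = 0) (k : ℕ) (c : F) :
    ∑ f : Fin k → I, (∏ t, q (f t)) * ‖c + ∑ t, w (f t)‖ ^ 2
      = ‖c‖ ^ 2 + k * ∑ i, q i * ‖w i‖ ^ 2 := by
  induction k generalizing c with
  | zero => simp
  | succ k ih =>
    calc ∑ f : Fin (k + 1) → I, (∏ t, q (f t)) * ‖c + ∑ t, w (f t)‖ ^ 2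
        = ∑ i, q i * ∑ f : Fin k → I,
            (∏ t, q (f t)) * ‖(c + w i) + ∑ t, w (f t)‖ ^ 2 := by
          rw [sum_fin_succ_pi]
          refine sum_congr rfl fun i _ => ?_
          rw [mul_sum]
          refine sum_congr rfl fun f _ => ?_
          simp only [Fin.prod_univ_succ, Fin.sum_univ_succ, Fin.cons_zero, Fin.cons_succ,
            add_assoc]
          ring
      _ = ∑ i, q i * ‖c + w i‖ ^ 2 + k * ∑ i, q i * ‖w i‖ ^ 2 := by
          simp_rw [ih, mul_add, sum_add_distrib, ← sum_mul, hq, one_mul]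
      _ = ‖c‖ ^ 2 + (k + 1 : ℕ) * ∑ i, q i * ‖w i‖ ^ 2 := by
          rw [sum_mul_norm_add_sq hq hw]; push_cast; ring

theorem sum_prod_eq_one {q : I → ℝ} (hq : ∑ i, q i = 1) (k : ℕ) :
    ∑ f : Fin k → I, ∏ t, q (f t) = 1 := by
  classical
  rw [← Fintype.prod_sum (fun _ : Fin k => q), hq, prod_const_one]

theorem sum_smul_sub_sum_smul_eq_zero {q : I → ℝ} (hq : ∑ i, q i = 1) (z : I → F) :
    ∑ i, q i • (z i - ∑ j, q j • z j) = 0 := by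
  simp [smul_sub, sum_sub_distrib, ← sum_smul, hq]

theorem sum_prod_mul_norm_sub_smul_sum_sq {q : I → ℝ} (hq : ∑ i, q i = 1) (z : I → F) {k : ℕ}
    (hk : 0 < k) (σ : ℝ) :
    ∑ f : Fin k → I, (∏ t, q (f t)) * ‖(∑ i, q i • z i) - (σ / k) • ∑ t, z (f t)‖ ^ 2
      = (1 - σ) ^ 2 * ‖∑ i, q i • z i‖ ^ 2
        + σ ^ 2 / k * ∑ i, q i * ‖z i - ∑ j, q j • z j‖ ^ 2 := by
  set A := ∑ i, q i • z i
  have hk0 : (k : ℝ) ≠ 0 := by positivity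
  have hcentered : ∑ i, q i • (z i - A) = 0 := sum_smul_sub_sum_smul_eq_zero hq z
  set w : I → F := fun i => -(σ / k) • (z i - A)
  have hw : ∑ i, q i • w i = 0 := by
    simp only [w, smul_comm (q _) (-(σ / k))]
    rw [← smul_sum, hcentered, smul_zero]
  have hsplit : ∀ f : Fin k → I, A - (σ / k) • ∑ t, z (f t) = (1 - σ) • A + ∑ t, w (f t) := by
    intro f
    simp_rw [w, ← smul_sum, sum_sub_distrib, sum_const, card_univ, Fintype.card_fin, smul_sub,
      ← Nat.cast_smul_eq_nsmul ℝ, smul_smul]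
    rw [show -(σ / k) * k = -σ by field_simp]
    module
  simp_rw [hsplit, sum_prod_mul_norm_add_sum_sq hq hw, w, norm_smul, mul_pow, norm_neg,
    Real.norm_eq_abs, sq_abs, mul_sum]
  congr 1
  exact sum_congr rfl fun i _ => by field_simp

/-- **Maurey's lemma**, in the sharpened form that also shrinks the empirical mean by `σ`. -/
theorem exists_norm_sub_smul_sum_sq_le {S : Set F} {a : ℝ} (hS : ∀ y ∈ S, ‖y‖ ≤ a) {A : F}
    (hA : A ∈ convexHull ℝ S) {k : ℕ} (hk : 0 < k) (σ : ℝ) :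
    ∃ y : Fin k → F, (∀ t, y t ∈ S) ∧
      ‖A - (σ / k) • ∑ t, y t‖ ^ 2 ≤ (1 - σ) ^ 2 * ‖A‖ ^ 2 + σ ^ 2 / k * (a ^ 2 - ‖A‖ ^ 2) := by
  obtain ⟨ι, _, q, z, hq0, hq1, hzS, rfl⟩ := mem_convexHull_iff_exists_fintype.1 hA
  set A := ∑ i, q i • z i
  have hvar : ∑ i, q i * ‖z i - A‖ ^ 2 ≤ a ^ 2 - ‖A‖ ^ 2 := by
    have hcentered : ∑ i, q i • (z i - A) = 0 := sum_smul_sub_sum_smul_eq_zero hq1 z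
    have h := sum_mul_norm_add_sq hq1 hcentered A
    simp_rw [add_sub_cancel] at h
    have hle : ∑ i, q i * ‖z i‖ ^ 2 ≤ ∑ i, q i * a ^ 2 := by
      gcongr with i
      · exact hq0 i
      · exact hS _ (hzS i)
    rw [← sum_mul, hq1, one_mul] at hle
    linarith
  obtain ⟨f, hf⟩ := exists_le_sum_mul_of_sum_eq_one (v := fun f : Fin k → ι =>
    ‖A - (σ / k) • ∑ t, z (f t)‖ ^ 2) (fun f => prod_nonneg fun t _ => hq0 (f t))
    (sum_prod_eq_one hq1 k)
  refine ⟨fun t => z (f t), fun t => hzS _, hf.trans ?_⟩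
  rw [sum_prod_mul_norm_sub_smul_sum_sq hq1 z hk σ]
  gcongr

theorem norm_le_of_mem_convexHull {S : Set F} {a : ℝ} (hS : ∀ y ∈ S, ‖y‖ ≤ a) {A : F}
    (hA : A ∈ convexHull ℝ S) : ‖A‖ ≤ a :=
  mem_closedBall_zero_iff.1 <|
    convexHull_min (fun y hy => mem_closedBall_zero_iff.2 (hS y hy)) (convex_closedBall 0 a) hA

theorem exists_pos_nat_between_sub_div_sq_and_sq_div {a ε : ℝ} (hε : 0 < ε) (hεa : ε < a) :
    ∃ k : ℕ, 0 < k ∧ ((a - ε) / ε) ^ 2 ≤ k ∧ (k : ℝ) ≤ a ^ 2 / ε ^ 2 := by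
  refine ⟨⌈((a - ε) / ε) ^ 2⌉₊, Nat.ceil_pos.2 (by have := sub_pos.2 hεa; positivity),
    Nat.le_ceil _, (Nat.ceil_lt_add_one (by positivity)).le.trans ?_⟩
  rw [div_pow, div_add_one (by positivity), div_le_div_iff_of_pos_right (by positivity)]
  nlinarith

/-- **Maurey's sparsification lemma.** Shrinking the empirical mean by `σ = 1 - ε / a` is what
allows `k ≤ a² / ε²` rather than `k = ⌈a² / ε²⌉`. -/
theorem exists_nat_le_forall_mem_convexHull_norm_sub_smul_sum_le {S : Set F} {a : ℝ}
    (hS : ∀ y ∈ S, ‖y‖ ≤ a) {ε : ℝ} (hε : 0 < ε) :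
    ∃ (k : ℕ) (c : ℝ), (k : ℝ) ≤ a ^ 2 / ε ^ 2 ∧ ∀ A ∈ convexHull ℝ S,
      ∃ y : Fin k → F, (∀ t, y t ∈ S) ∧ ‖A - c • ∑ t, y t‖ ≤ ε := by
  rcases le_or_gt a ε with hεa | hεa
  · exact ⟨0, 0, by rw [Nat.cast_zero]; positivity, fun A hA =>
      ⟨Fin.elim0, Fin.rec0, by simpa using (norm_le_of_mem_convexHull hS hA).trans hεa⟩⟩
  obtain ⟨k, hk, hkε, hka⟩ := exists_pos_nat_between_sub_div_sq_and_sq_div hε hεa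
  have ha : 0 < a := hε.trans hεa
  refine ⟨k, (a - ε) / a / k, hka, fun A hA => ?_⟩
  obtain ⟨y, hyS, hy⟩ := exists_norm_sub_smul_sum_sq_le hS hA hk ((a - ε) / a)
  refine ⟨y, hyS, (pow_le_pow_iff_left₀ (norm_nonneg _) hε.le two_ne_zero).1 (hy.trans ?_)⟩
  have hAa : ‖A‖ ^ 2 ≤ a ^ 2 := by gcongr; exact norm_le_of_mem_convexHull hS hA
  have hσ : ((a - ε) / a) ^ 2 / k ≤ (ε / a) ^ 2 := by
    rw [div_le_iff₀ (by positivity), div_pow, div_pow, div_mul_eq_mul_div,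
      div_le_div_iff_of_pos_right (by positivity)]
    rwa [div_pow, div_le_iff₀ (by positivity), mul_comm] at hkε
  calc (1 - (a - ε) / a) ^ 2 * ‖A‖ ^ 2 + ((a - ε) / a) ^ 2 / k * (a ^ 2 - ‖A‖ ^ 2)
      ≤ (ε / a) ^ 2 * ‖A‖ ^ 2 + (ε / a) ^ 2 * (a ^ 2 - ‖A‖ ^ 2) := by
        rw [show 1 - (a - ε) / a = ε / a by field_simp; ring]
        gcongr
    _ = ε ^ 2 := by field_simp; ring

theorem exists_mem_forall_norm_sub_le_norm_sub [CompleteSpace F] {K : Set F} (hne : K.Nonempty)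
    (hKc : IsClosed K) (hK : Convex ℝ K) (u : F) : ∃ v ∈ K, ∀ A ∈ K, ‖A - v‖ ≤ ‖A - u‖ := by
  obtain ⟨v, hvK, hv⟩ := exists_norm_eq_iInf_of_complete_convex hne hKc.isComplete hK u
  refine ⟨v, hvK, fun A hA => ?_⟩
  have hobtuse : ⟪A - v, u - v⟫ ≤ 0 := by
    rw [real_inner_comm]; exact (norm_eq_iInf_iff_real_inner_le_zero hK hvK).1 hv A hA
  have hexpand : ‖A - u‖ ^ 2 = ‖A - v‖ ^ 2 - 2 * ⟪A - v, u - v⟫ + ‖u - v‖ ^ 2 := by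
    rw [← norm_sub_sq_real, sub_sub_sub_cancel_right]
  exact (pow_le_pow_iff_left₀ (norm_nonneg _) (norm_nonneg _) two_ne_zero).1
    (by nlinarith [sq_nonneg ‖u - v‖])

theorem exists_finset_cover_of_subset_convexHull [CompleteSpace F] {K : Set F}
    (hKc : IsClosed K) (hK : Convex ℝ K) {z : I → F} {a : ℝ} (hz : ∀ i, ‖z i‖ ≤ a)
    (hKz : K ⊆ convexHull ℝ (Set.range z)) {ε : ℝ} (hε : 0 < ε) :
    ∃ V : Finset F, (∀ A ∈ V, A ∈ K) ∧ (∀ A ∈ K, ∃ A' ∈ V, ‖A - A'‖ ≤ ε) ∧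
      Real.log V.card ≤ a ^ 2 / ε ^ 2 * Real.log (Fintype.card I) := by
  classical
  have hlog : 0 ≤ a ^ 2 / ε ^ 2 * Real.log (Fintype.card I) :=
    mul_nonneg (by positivity) (Real.log_natCast_nonneg _)
  rcases K.eq_empty_or_nonempty with rfl | hne
  · exact ⟨∅, by simp, by simp, by simpa using hlog⟩
  obtain ⟨k, c, hk, happrox⟩ :=
    exists_nat_le_forall_mem_convexHull_norm_sub_smul_sum_le (Set.forall_mem_range.2 hz) hε
  choose P hPK hP using exists_mem_forall_norm_sub_le_norm_sub hne hKc hK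
  have hI : Nonempty I := by
    obtain ⟨A, hA⟩ := hne
    obtain ⟨_, i, -⟩ := convexHull_nonempty_iff.1 ⟨A, hKz hA⟩
    exact ⟨i⟩
  refine ⟨Finset.univ.image fun f : Fin k → I => P (c • ∑ t, z (f t)), ?_, fun A hA => ?_, ?_⟩
  · simpa using fun f => hPK _
  · obtain ⟨y, hy, hAy⟩ := happrox A (hKz hA)
    choose f hf using hy
    exact ⟨_, mem_image_of_mem _ (mem_univ f), (hP _ A hA).trans (by simpa [hf] using hAy)⟩
  · calc Real.log (Finset.univ.image fun f : Fin k → I => P (c • ∑ t, z (f t))).card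
        ≤ Real.log (Fintype.card (Fin k → I)) :=
          Real.log_le_log (by simp [Finset.univ_nonempty]) (by exact_mod_cast card_image_le)
      _ = k * Real.log (Fintype.card I) := by simp [Real.log_pow]
      _ ≤ a ^ 2 / ε ^ 2 * Real.log (Fintype.card I) := by gcongr

end Maurey

section SignedHull

variable {F : Type*} [NormedAddCommGroup F] [InnerProductSpace ℝ F] {I : Type*}

theorem sum_smul_mem_convexHull_sumElim_neg {E : Type*} [AddCommGroup E] [Module ℝ E]
    [Fintype I] [Nonempty I] (y : I → E) {t : I → ℝ} (ht : ∑ i, |t i| ≤ 1) :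
    ∑ i, t i • y i ∈ convexHull ℝ (Set.range (Sum.elim y (-y))) := by
  set H := convexHull ℝ (Set.range (Sum.elim y (-y)))
  have hH : Convex ℝ H := convex_convexHull ℝ _
  have hy : ∀ i, y i ∈ H := fun i => subset_convexHull ℝ _ ⟨Sum.inl i, rfl⟩
  have hny : ∀ i, -y i ∈ H := fun i => subset_convexHull ℝ _ ⟨Sum.inr i, rfl⟩
  have h0 : (0 : E) ∈ H := by
    obtain ⟨i⟩ := ‹Nonempty I›
    have h := hH (hy i) (hny i) (a := 1 / 2) (b := 1 / 2) (by norm_num) (by norm_num)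
      (by norm_num)
    rwa [smul_neg, add_neg_cancel] at h
  set s : I → E := fun i => if 0 ≤ t i then y i else -y i
  have hs : ∀ i, t i • y i = |t i| • s i := by
    intro i
    by_cases hti : 0 ≤ t i
    · simp [s, hti, abs_of_nonneg hti]
    · simp [s, hti, abs_of_neg (not_le.1 hti)]
  have hmem := hH.sum_mem (t := Finset.univ) (w := Option.elim' (1 - ∑ i, |t i|) (|t ·|))
    (z := Option.elim' 0 s) (by rintro (_ | i) - <;> simp [ht])
    (by simp [Fintype.sum_option]) (by
      rintro (_ | i) -
      · exact h0
      · by_cases hti : 0 ≤ t i <;> simp [s, hti, hy, hny])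
  simpa [Fintype.sum_option, hs] using hmem

/-- Since `a / 0 = 0`, the atoms coming from a zero `y i` are `0`. -/
noncomputable def signedAtoms (a : ℝ) (y : I → F) : I ⊕ I → F :=
  Sum.elim (fun i => (a / ‖y i‖) • y i) (-fun i => (a / ‖y i‖) • y i)

theorem sum_smul_mem_convexHull_of_sum_abs_mul_norm_le [Fintype I] [Nonempty I] (y : I → F)
    {β : I → ℝ} {a : ℝ} (h : ∑ i, |β i| * ‖y i‖ ≤ a) :
    ∑ i, β i • y i ∈ convexHull ℝ (Set.range (signedAtoms a y)) := by
  have hnonneg : 0 ≤ ∑ i, |β i| * ‖y i‖ := sum_nonneg fun i _ => by positivity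
  have hterm : ∀ i, β i • y i = (β i * ‖y i‖ / a) • (a / ‖y i‖) • y i := by
    intro i
    rcases eq_or_ne (y i) 0 with hy | hy
    · simp [hy]
    rcases (hnonneg.trans h).eq_or_lt with rfl | ha
    · have h0 := (sum_eq_zero_iff_of_nonneg fun i _ => by positivity).1
        (le_antisymm h hnonneg) i (mem_univ i)
      simp [hy] at h0
      simp [h0]
    · rw [smul_smul]; congr 1; field_simp
  rw [sum_congr rfl fun i _ => hterm i]
  refine sum_smul_mem_convexHull_sumElim_neg _ ?_
  simp_rw [abs_div, abs_mul, abs_norm, ← sum_div]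
  exact div_le_one_of_le₀ (h.trans (le_abs_self a)) (abs_nonneg a)

theorem norm_signedAtoms_le (a : ℝ) (y : I → F) (j : I ⊕ I) : ‖signedAtoms a y j‖ ≤ |a| := by
  have key : ∀ i, ‖(a / ‖y i‖) • y i‖ ≤ |a| := fun i => by
    rcases eq_or_ne (y i) 0 with hy | hy
    · simp [hy]
    · rw [norm_smul, Real.norm_eq_abs, abs_div, abs_norm,
        div_mul_cancel₀ _ (norm_ne_zero_iff.2 hy)]
  rcases j with i | i
  · exact key i
  · simpa [signedAtoms] using key i

end SignedHull

theorem Real.rpow_sum_le_sum_rpow {ι : Type*} (s : Finset ι) {f : ι → ℝ}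
    (hf : ∀ i ∈ s, 0 ≤ f i) {q : ℝ} (hq0 : 0 < q) (hq1 : q ≤ 1) :
    (∑ i ∈ s, f i) ^ q ≤ ∑ i ∈ s, f i ^ q :=
  le_sum_of_subadditive_on_pred (· ^ q) (0 ≤ ·) (by simp [Real.zero_rpow hq0.ne'])
    (fun _ _ hx hy => Real.rpow_add_le_add_rpow hx hy hq0.le hq1) (fun _ _ => add_nonneg) f hf

theorem Real.sqrt_sum_sq_le_rpow_sum {ι : Type*} (s : Finset ι) (f : ι → ℝ) {v : ℝ}
    (hv0 : 0 < v) (hv2 : v ≤ 2) : √(∑ i ∈ s, f i ^ 2) ≤ (∑ i ∈ s, |f i| ^ v) ^ (1 / v) := by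
  have hS : 0 ≤ ∑ i ∈ s, f i ^ 2 := sum_nonneg fun i _ => sq_nonneg _
  have hsq : ∀ i, (f i ^ 2) ^ (v / 2) = |f i| ^ v := fun i => by
    rw [← sq_abs, ← Real.rpow_natCast, ← Real.rpow_mul (abs_nonneg _)]
    congr 1
    push_cast
    ring
  calc √(∑ i ∈ s, f i ^ 2) = ((∑ i ∈ s, f i ^ 2) ^ (v / 2)) ^ (1 / v) := by
        rw [Real.sqrt_eq_rpow, ← Real.rpow_mul hS]; congr 1; field_simp
    _ ≤ (∑ i ∈ s, |f i| ^ v) ^ (1 / v) := by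
        gcongr
        simpa only [hsq] using Real.rpow_sum_le_sum_rpow s (fun i _ => sq_nonneg (f i))
          (q := v / 2) (by positivity) (by linarith)

theorem setOf_rpow_sum_le_eq_image_closedBall {ι : Type*} [Fintype ι] {r : ℝ} (hr : 0 < r)
    [Fact (1 ≤ ENNReal.ofReal r)] (b : ℝ) :
    {β : ι → ℝ | (∑ i, |β i| ^ r) ^ (1 / r) ≤ b} =
      WithLp.ofLp '' Metric.closedBall (0 : PiLp (ENNReal.ofReal r) fun _ : ι => ℝ) b := by
  have hr' : (ENNReal.ofReal r).toReal = r := ENNReal.toReal_ofReal hr.le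
  ext β
  constructor
  · intro hβ
    refine ⟨WithLp.toLp _ β, ?_, rfl⟩
    rw [mem_closedBall_zero_iff, PiLp.norm_eq_sum (by rwa [hr']), hr']
    simpa using hβ
  · rintro ⟨β, hβ, rfl⟩
    rw [mem_closedBall_zero_iff, PiLp.norm_eq_sum (by rwa [hr']), hr'] at hβ
    simpa using hβ

theorem convex_setOf_rpow_sum_le {ι : Type*} [Fintype ι] {r : ℝ} (hr : 1 ≤ r) (b : ℝ) :
    Convex ℝ {β : ι → ℝ | (∑ i, |β i| ^ r) ^ (1 / r) ≤ b} := by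
  have : Fact (1 ≤ ENNReal.ofReal r) := ⟨by simpa using hr⟩
  rw [setOf_rpow_sum_le_eq_image_closedBall (by linarith)]
  exact (convex_closedBall _ b).linear_image
    (WithLp.linearEquiv (ENNReal.ofReal r) ℝ (ι → ℝ)).toLinearMap

theorem isCompact_setOf_rpow_sum_le {ι : Type*} [Fintype ι] {r : ℝ} (hr : 1 ≤ r) (b : ℝ) :
    IsCompact {β : ι → ℝ | (∑ i, |β i| ^ r) ^ (1 / r) ≤ b} := by
  have : Fact (1 ≤ ENNReal.ofReal r) := ⟨by simpa using hr⟩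
  rw [setOf_rpow_sum_le_eq_image_closedBall (by linarith)]
  exact (isCompact_closedBall _ b).image (PiLp.continuous_ofLp _ _)

theorem frobNorm_nonneg {n m : ℕ} (A : Fin n → Fin m → ℝ) : 0 ≤ frobNorm A := Real.sqrt_nonneg _

noncomputable def matrixEuclideanEquiv {n m : ℕ} :
    (Fin n → Fin m → ℝ) ≃ₗ[ℝ] EuclideanSpace ℝ (Fin n × Fin m) :=
  (LinearEquiv.curry ℝ ℝ (Fin n) (Fin m)).symm ≪≫ₗ (WithLp.linearEquiv 2 ℝ _).symm

theorem norm_matrixEuclideanEquiv {n m : ℕ} (A : Fin n → Fin m → ℝ) :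
    ‖matrixEuclideanEquiv A‖ = frobNorm A := by
  simp [matrixEuclideanEquiv, EuclideanSpace.norm_eq, frobNorm, Fintype.sum_prod_type]

section BasisClass

variable {α : Type*} {n m p : ℕ} (g : Fin m → Fin p → α → ℝ) (x : Fin n → α)

/-- `Ψ(X)` for the coefficient matrix `β = e_{ij}`. -/
def basisAtom (i : Fin m) (j : Fin p) : Fin n → Fin m → ℝ :=
  fun k i' => if i' = i then g i j (x k) else 0

noncomputable def basisMap : (Fin m × Fin p → ℝ) →ₗ[ℝ] (Fin n → Fin m → ℝ) :=
  Fintype.linearCombination ℝ fun ij => basisAtom g x ij.1 ij.2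

theorem basisMap_apply (β : Fin m × Fin p → ℝ) (k : Fin n) (i : Fin m) :
    basisMap g x β k i = ∑ j, β (i, j) * g i j (x k) := by
  simp [basisMap, Fintype.linearCombination_apply, basisAtom, Fintype.sum_prod_type]

theorem basisClass_eq_image (r b : ℝ) :
    basisClass n m p g x r b = basisMap g x '' {β | (∑ ij, |β ij| ^ r) ^ (1 / r) ≤ b} := by
  ext A
  simp only [basisClass, Set.mem_ofPred_eq, Set.mem_image, funext_iff, basisMap_apply,
    Fintype.sum_prod_type]
  constructor
  · rintro ⟨β, hβ, hA⟩
    exact ⟨fun ij => β ij.1 ij.2, hβ, fun k i => (hA k i).symm⟩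
  · rintro ⟨β, hβ, hA⟩
    exact ⟨fun i j => β (i, j), hβ, fun k i => (hA k i).symm⟩

theorem frobNorm_basisAtom_le {v : ℝ} (hv0 : 0 < v) (hv2 : v ≤ 2) (i : Fin m) (j : Fin p) :
    frobNorm (basisAtom g x i j) ≤ (∑ k, |g i j (x k)| ^ v) ^ (1 / v) := by
  simpa [frobNorm, basisAtom, ite_pow] using Real.sqrt_sum_sq_le_rpow_sum univ (g i j ∘ x) hv0 hv2

theorem sum_abs_mul_frobNorm_basisAtom_le {r s v b c : ℝ} (hrs : r.HolderConjugate s)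
    (hv0 : 0 < v) (hv2 : v ≤ 2)
    (hG : (∑ i, ∑ j, (∑ k, |g i j (x k)| ^ v) ^ (s / v)) ^ (1 / s) ≤ c)
    {β : Fin m × Fin p → ℝ} (hβ : (∑ ij, |β ij| ^ r) ^ (1 / r) ≤ b) :
    ∑ ij, |β ij| * frobNorm (basisAtom g x ij.1 ij.2) ≤ b * c := by
  have hs : 0 < s := hrs.symm.pos
  set G : Fin m × Fin p → ℝ := fun ij => ∑ k, |g ij.1 ij.2 (x k)| ^ v
  have hG0 : ∀ ij, 0 ≤ G ij := fun _ => sum_nonneg fun _ _ => by positivity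
  have hcol : (∑ ij : Fin m × Fin p, |frobNorm (basisAtom g x ij.1 ij.2)| ^ s) ^ (1 / s) ≤ c := by
    refine le_trans ?_ hG
    rw [← Fintype.sum_prod_type (f := fun ij : Fin m × Fin p => G ij ^ (s / v))]
    gcongr with ij
    rw [div_eq_mul_one_div s v, mul_comm, Real.rpow_mul (hG0 ij), abs_of_nonneg (frobNorm_nonneg _)]
    exact Real.rpow_le_rpow (frobNorm_nonneg _) (frobNorm_basisAtom_le g x hv0 hv2 ij.1 ij.2) hs.le
  have hb : 0 ≤ b := (Real.rpow_nonneg (sum_nonneg fun _ _ => by positivity) _).trans hβ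
  have hHolder := Real.inner_le_Lp_mul_Lq univ (fun ij => |β ij|)
    (fun ij => frobNorm (basisAtom g x ij.1 ij.2)) hrs
  simp only [abs_abs] at hHolder
  exact hHolder.trans (mul_le_mul hβ hcol (by positivity) hb)

theorem image_basisClass_subset_convexHull [Nonempty (Fin m × Fin p)] {r s v b c : ℝ}
    (hrs : r.HolderConjugate s) (hv0 : 0 < v) (hv2 : v ≤ 2)
    (hG : (∑ i, ∑ j, (∑ k, |g i j (x k)| ^ v) ^ (s / v)) ^ (1 / s) ≤ c) :
    matrixEuclideanEquiv '' basisClass n m p g x r b ⊆ convexHull ℝ (Set.range (signedAtoms |b * c|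
      fun ij : Fin m × Fin p => matrixEuclideanEquiv (basisAtom g x ij.1 ij.2))) := by
  rintro _ ⟨A, hA, rfl⟩
  rw [basisClass_eq_image] at hA
  obtain ⟨β, hβ, rfl⟩ := hA
  have hsum : matrixEuclideanEquiv (basisMap g x β)
      = ∑ ij, β ij • matrixEuclideanEquiv (basisAtom g x ij.1 ij.2) := by
    simp [basisMap, Fintype.linearCombination_apply]
  rw [hsum]
  refine sum_smul_mem_convexHull_of_sum_abs_mul_norm_le _ ((le_abs_self _).trans' ?_)
  simpa only [norm_matrixEuclideanEquiv] using
    sum_abs_mul_frobNorm_basisAtom_le g x hrs hv0 hv2 hG hβ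

theorem convex_basisClass {r : ℝ} (hr : 1 ≤ r) (b : ℝ) : Convex ℝ (basisClass n m p g x r b) := by
  rw [basisClass_eq_image]
  exact (convex_setOf_rpow_sum_le hr b).linear_image _

theorem isCompact_basisClass {r : ℝ} (hr : 1 ≤ r) (b : ℝ) :
    IsCompact (basisClass n m p g x r b) := by
  rw [basisClass_eq_image]
  exact (isCompact_setOf_rpow_sum_le hr b).image (basisMap g x).continuous_of_finiteDimensional

end BasisClass

theorem exists_finset_frobNorm_cover_of_image {n m : ℕ} {K : Set (Fin n → Fin m → ℝ)} {ε L : ℝ}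
    (h : ∃ V : Finset (EuclideanSpace ℝ (Fin n × Fin m)),
      (∀ A ∈ V, A ∈ matrixEuclideanEquiv '' K) ∧
      (∀ A ∈ matrixEuclideanEquiv '' K, ∃ A' ∈ V, ‖A - A'‖ ≤ ε) ∧ Real.log V.card ≤ L) :
    ∃ V : Finset (Fin n → Fin m → ℝ),
      (∀ A ∈ V, A ∈ K) ∧ (∀ A ∈ K, ∃ A' ∈ V, frobNorm (A - A') ≤ ε) ∧ Real.log V.card ≤ L := by
  obtain ⟨V, hVK, hcover, hcard⟩ := h
  refine ⟨V.image matrixEuclideanEquiv.symm, fun A hA => ?_, fun A hA => ?_, ?_⟩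
  · obtain ⟨A', hA', rfl⟩ := mem_image.1 hA
    obtain ⟨B, hB, rfl⟩ := hVK A' hA'
    simpa using hB
  · obtain ⟨A', hA', hAA'⟩ := hcover (matrixEuclideanEquiv A) ⟨A, hA, rfl⟩
    refine ⟨matrixEuclideanEquiv.symm A', mem_image_of_mem _ hA', ?_⟩
    rwa [← norm_matrixEuclideanEquiv, map_sub, LinearEquiv.apply_symm_apply]
  · rwa [card_image_of_injective _ matrixEuclideanEquiv.symm.injective]

/-- **Covering bound for basis-represented activation layers (Proposition 2).** -/
theorem log_coverNum_basisClass_le {α : Type*} (n m p : ℕ) (hm : 0 < m) (hp : 0 < p)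
    (g : Fin m → Fin p → α → ℝ) (x : Fin n → α)
    (b c r s v : ℝ) (hr : 0 < r) (hs : 0 < s) (hrs : 1 / r + 1 / s = 1)
    (hv0 : 0 < v) (hv2 : v ≤ 2)
    (hG : (∑ i, ∑ j, (∑ k, |g i j (x k)| ^ v) ^ (s / v)) ^ (1 / s) ≤ c)
    (ε : ℝ) (hε : 0 < ε) :
    ∃ V : Finset (Fin n → Fin m → ℝ),
      (∀ A ∈ V, A ∈ basisClass n m p g x r b) ∧
      (∀ A ∈ basisClass n m p g x r b, ∃ A' ∈ V, frobNorm (A - A') ≤ ε) ∧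
      Real.log V.card ≤ b ^ 2 * c ^ 2 / ε ^ 2 * Real.log (2 * m * p) := by
  have hrs' : r.HolderConjugate s := ⟨by simpa [one_div] using hrs, hr, hs⟩
  have : Nonempty (Fin m × Fin p) := ⟨(⟨0, hm⟩, ⟨0, hp⟩)⟩
  refine exists_finset_frobNorm_cover_of_image ?_
  obtain ⟨V, hVK, hcover, hcard⟩ := exists_finset_cover_of_subset_convexHull
    ((isCompact_basisClass g x hrs'.lt.le b).image
      (LinearMap.continuous_of_finiteDimensional matrixEuclideanEquiv.toLinearMap)).isClosed
    ((convex_basisClass g x hrs'.lt.le b).linear_image matrixEuclideanEquiv.toLinearMap)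
    (norm_signedAtoms_le _ _) (image_basisClass_subset_convexHull g x hrs' hv0 hv2 hG) hε
  refine ⟨V, hVK, hcover, hcard.trans_eq ?_⟩
  rw [abs_abs, sq_abs, mul_pow, Fintype.card_sum, Fintype.card_prod, Fintype.card_fin,
    Fintype.card_fin, ← two_mul, Nat.cast_mul, Nat.cast_mul, Nat.cast_two, ← mul_assoc]
end

section
/- Given positive reals $B_i, c_i, \rho_i$ for $1 \leq i \leq L$ and $D > 0$, define $\alpha_i = (B_i c_i D \prod_{j=1}^L \rho_j)^{2/3}$ and $\tilde{\alpha} = \sum_{i=1}^L \alpha_i$. Suppose for each $i$ and every $\epsilon_i > 0$ the $i$-th layer class admits covering bound $\log N_i(\epsilon_i) \leq \frac{B_i^2 c_i^2 D^2 (\prod_{k=1}^i \rho_k)^2}{\epsilon_i^2} K$ for a constant $K > 0$, and the composed class satisfies $\log \mathcal{N}(\mathcal{H}, \sum_{i=1}^L (\prod_{j=i+1}^L \rho_j)\epsilon_i) \leq \sum_{i=1}^L \log N_i(\epsilon_i)$. Then choosing $\epsilon_i = \frac{\alpha_i \epsilon}{\tilde{\alpha} \prod_{j=i+1}^L \rho_j}$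 yields $\log \mathcal{N}(\mathcal{H}, \epsilon) \leq \frac{\tilde{\alpha}^3 K}{\epsilon^2}$ for all $\epsilon > 0$. -/
/-!
With `α_i = b_i^{2/3}` and `A = ∑ α_i`, the allocation `δ_i = α_i ε / A` of the total
resolution `ε` makes every term `b_i² / δ_i²` equal to `α_i A² / ε²`, because
`b_i² = α_i³`; summing gives `A³ / ε²`. For the composed class, `b_i` is the layer constant
`B_i c_i D ∏_{k ≤ i} ρ_k` times the Lipschitz factor `∏_{j > i} ρ_j` of the later layers,
and the layer receives resolution `ε_i = δ_i / ∏_{j > i} ρ_j`.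
-/

open Finset

namespace CoverAllocation

variable {ι : Type*} (s : Finset ι) (b : ι → ℝ) (ε : ℝ)

noncomputable def optimalAllocation (i : ι) : ℝ :=
  b i ^ ((2 : ℝ) / 3) * ε / ∑ j ∈ s, b j ^ ((2 : ℝ) / 3)

variable {s b ε}

lemma rpow_two_thirds_pow_three {x : ℝ} (hx : 0 ≤ x) : (x ^ ((2 : ℝ) / 3)) ^ 3 = x ^ 2 := by
  rw [← Real.rpow_mul_natCast hx, ← Real.rpow_natCast]
  norm_num

lemma sum_rpow_two_thirds_pos (hb : ∀ i ∈ s, 0 < b i) (hs : s.Nonempty) :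
    0 < ∑ j ∈ s, b j ^ ((2 : ℝ) / 3) :=
  sum_pos (fun j hj => Real.rpow_pos_of_pos (hb j hj) _) hs

lemma optimalAllocation_pos (hb : ∀ i, 0 < b i) (hs : s.Nonempty) (hε : 0 < ε) (i : ι) :
    0 < optimalAllocation s b ε i :=
  div_pos (mul_pos (Real.rpow_pos_of_pos (hb i) _) hε)
    (sum_rpow_two_thirds_pos (fun j _ => hb j) hs)

lemma sum_optimalAllocation (hb : ∀ i ∈ s, 0 < b i) (hs : s.Nonempty) :
    ∑ i ∈ s, optimalAllocation s b ε i = ε := by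
  unfold optimalAllocation
  rw [← sum_div, ← sum_mul, mul_div_cancel_left₀ _ (sum_rpow_two_thirds_pos hb hs).ne']

lemma sq_div_optimalAllocation_sq (hb : ∀ i ∈ s, 0 < b i) (hε : ε ≠ 0) {i : ι}
    (hi : i ∈ s) :
    b i ^ 2 / optimalAllocation s b ε i ^ 2
      = b i ^ ((2 : ℝ) / 3) * (∑ j ∈ s, b j ^ ((2 : ℝ) / 3)) ^ 2 / ε ^ 2 := by
  have hα := (Real.rpow_pos_of_pos (hb i hi) ((2 : ℝ) / 3)).ne'
  have hA := (sum_rpow_two_thirds_pos hb ⟨i, hi⟩).ne'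
  unfold optimalAllocation
  rw [← rpow_two_thirds_pow_three (hb i hi).le]
  field_simp

lemma sum_sq_div_optimalAllocation_sq (hb : ∀ i ∈ s, 0 < b i) (hε : ε ≠ 0) :
    ∑ i ∈ s, b i ^ 2 / optimalAllocation s b ε i ^ 2
      = (∑ j ∈ s, b j ^ ((2 : ℝ) / 3)) ^ 3 / ε ^ 2 := by
  rw [sum_congr rfl fun i hi => sq_div_optimalAllocation_sq hb hε hi, ← sum_div, ← sum_mul]
  ring

end CoverAllocation

open CoverAllocation

/-- Layers are indexed by `i = 0, …, L-1` (layer `i` here is layer `i+1` of the paper);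
`lN i` is the log covering number of layer `i` and `H` that of the composed class. -/
theorem cover_allocation_bound_general (L : ℕ) (hL : 0 < L) (B c ρ : ℕ → ℝ) (D K : ℝ)
    (hB : ∀ i, 0 < B i) (hc : ∀ i, 0 < c i) (hρ : ∀ i, 0 < ρ i)
    (hD : 0 < D)
    (lN : ℕ → ℝ → ℝ) (H : ℝ → ℝ)
    (h1 : ∀ i < L, ∀ εi : ℝ, 0 < εi →
      lN i εi ≤ (B i) ^ 2 * (c i) ^ 2 * D ^ 2
        * (∏ k ∈ Finset.range (i + 1), ρ k) ^ 2 / εi ^ 2 * K)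
    (h2 : ∀ εv : ℕ → ℝ, (∀ i, 0 < εv i) →
      H (∑ i ∈ Finset.range L, (∏ j ∈ Finset.Ico (i + 1) L, ρ j) * εv i)
        ≤ ∑ i ∈ Finset.range L, lN i (εv i))
    (ε : ℝ) (hε : 0 < ε) :
    H ε ≤ (∑ i ∈ Finset.range L,
        (B i * c i * D * ∏ j ∈ Finset.range L, ρ j) ^ ((2 : ℝ) / 3)) ^ 3
      * K / ε ^ 2 := by
  set Q : ℕ → ℝ := fun i => ∏ j ∈ Ico (i + 1) L, ρ j
  set b : ℕ → ℝ := fun i => B i * c i * D * ∏ j ∈ range L, ρ j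
  have hQ (i : ℕ) : 0 < Q i := prod_pos fun j _ => hρ j
  have hb (i : ℕ) : 0 < b i :=
    mul_pos (mul_pos (mul_pos (hB i) (hc i)) hD) (prod_pos fun j _ => hρ j)
  have hL' : (range L).Nonempty := nonempty_range_iff.2 hL.ne'
  set εv : ℕ → ℝ := fun i => optimalAllocation (range L) b ε i / Q i
  have hεv (i : ℕ) : 0 < εv i := div_pos (optimalAllocation_pos hb hL' hε i) (hQ i)
  have hcover : ∑ i ∈ range L, Q i * εv i = ε := by
    simp only [εv, mul_div_cancel₀ _ (hQ _).ne']
    exact sum_optimalAllocation (fun i _ => hb i) hL'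
  have hlayer : ∀ i ∈ range L,
      lN i (εv i) ≤ b i ^ 2 / optimalAllocation (range L) b ε i ^ 2 * K := by
    intro i hi
    have hiL := mem_range.1 hi
    convert h1 i hiL (εv i) (hεv i) using 2
    simp only [b, εv, Q, div_pow, div_div_eq_mul_div, ← prod_range_mul_prod_Ico ρ hiL]
    ring
  calc H ε = H (∑ i ∈ range L, Q i * εv i) := by rw [hcover]
    _ ≤ ∑ i ∈ range L, lN i (εv i) := h2 εv hεv
    _ ≤ ∑ i ∈ range L, b i ^ 2 / optimalAllocation (range L) b ε i ^ 2 * K :=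
        sum_le_sum hlayer
    _ = _ := by rw [← sum_mul, sum_sq_div_optimalAllocation_sq (fun i _ => hb i) hε.ne']; ring

/-- **Resolution-allocation step in the proof of Theorem 1.** Layers are indexed
by `i = 0, …, L-1` (layer `i` here is layer `i+1` of the paper).  `lN i ε` is the
log covering number of layer `i` at resolution `ε` and `H ε` is the log covering
number of the composed class at resolution `ε`.  Allocating
`ε_i = α_i ε/(α̃ ∏_{j>i} ρ_j)` with `α_i = (B_i c_i D ∏_{j=1}^L ρ_j)^{2/3}` and
`α̃ = ∑ α_i` yields `H(ε) ≤ α̃³ K/ε²`. -/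
theorem cover_allocation_bound (L : ℕ) (hL : 0 < L) (B c ρ : ℕ → ℝ) (D K : ℝ)
    (hB : ∀ i, 0 < B i) (hc : ∀ i, 0 < c i) (hρ : ∀ i, 0 < ρ i)
    (hD : 0 < D) (hK : 0 < K)
    (lN : ℕ → ℝ → ℝ) (H : ℝ → ℝ)
    (h1 : ∀ i < L, ∀ εi : ℝ, 0 < εi →
      lN i εi ≤ (B i) ^ 2 * (c i) ^ 2 * D ^ 2
        * (∏ k ∈ Finset.range (i + 1), ρ k) ^ 2 / εi ^ 2 * K)
    (h2 : ∀ εv : ℕ → ℝ, (∀ i, 0 < εv i) →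
      H (∑ i ∈ Finset.range L, (∏ j ∈ Finset.Ico (i + 1) L, ρ j) * εv i)
        ≤ ∑ i ∈ Finset.range L, lN i (εv i))
    (ε : ℝ) (hε : 0 < ε) :
    H ε ≤ (∑ i ∈ Finset.range L,
        (B i * c i * D * ∏ j ∈ Finset.range L, ρ j) ^ ((2 : ℝ) / 3)) ^ 3
      * K / ε ^ 2 :=
  cover_allocation_bound_general L hL B c ρ D K hB hc hρ hD lN H h1 h2 ε hε
end
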